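/- Let K > 0 and ε ≠ 0 be real numbers and let D be a nonempty open subset of {(ρ,z) ∈ ℝ² : ρ > 0}. Then there exists no pair of twice continuously differentiable functions ψ, γ : D → ℝ satisfying simultaneously on D the four equations: ψ_ρ² + ψ_z² + γ_ρρ + γ_zz − 2(ψ_ρρ + ψ_ρ/ρ + ψ_zz) = K ε e^{2γ−2ψ}, γ_ρ = ρ(ψ_ρ² − ψ_z²), γ_z = 2ρψ_ρψ_z, and ψ_ρ² + ψ_z² + γ_ρρ + γ_zz = 0. -/

import Mathlib

/-- Partial derivative with respect to the first coordinate `ρ`. -/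
noncomputable def dρ (f : ℝ × ℝ → ℝ) (p : ℝ × ℝ) : ℝ := fderiv ℝ f p (1, 0)

/-- Partial derivative with respect to the second coordinate `z`. -/
noncomputable def dz (f : ℝ × ℝ → ℝ) (p : ℝ × ℝ) : ℝ := fderiv ℝ f p (0, 1)

/-!
Differentiating the two quadrature equations for `γ` and using the symmetry of second
derivatives, the vacuum equation becomes `2 ρ ψ_ρ Δψ = 0`, where `Δψ = ψ_ρρ + ψ_ρ/ρ + ψ_zz`.
Subtracting it from the fluid equation leaves `-2 Δψ = K ε e^{2γ-2ψ} ≠ 0`, so `ψ_ρ ≡ 0` and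
`Δψ = ψ_zz ≠ 0`. Then `γ_z = 2 ρ ψ_ρ ψ_z ≡ 0`, so `0 = γ_zρ = γ_ρz = -2 ρ ψ_z ψ_zz`, which forces
`ψ_z ≡ 0`, hence `ψ_zz ≡ 0`: a contradiction.
-/

open Filter Topology

section PartialDerivatives

variable {f a b : ℝ × ℝ → ℝ} {q : ℝ × ℝ}

lemma ContDiffAt.differentiableAt_fderiv_apply (hf : ContDiffAt ℝ 2 f q) (v : ℝ × ℝ) :
    DifferentiableAt ℝ (fun p => fderiv ℝ f p v) q :=
  ((hf.fderiv_right le_rfl).differentiableAt one_ne_zero).clm_apply (differentiableAt_const v)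

lemma ContDiffAt.fderiv_fderiv_apply (hf : ContDiffAt ℝ 2 f q) (v w : ℝ × ℝ) :
    fderiv ℝ (fun p => fderiv ℝ f p v) q w = fderiv ℝ (fderiv ℝ f) q w v := by
  rw [fderiv_clm_apply ((hf.fderiv_right le_rfl).differentiableAt one_ne_zero)
    (differentiableAt_const v)]
  simp

lemma ContDiffAt.dz_dρ_comm (hf : ContDiffAt ℝ 2 f q) : dz (dρ f) q = dρ (dz f) q :=
  (hf.fderiv_fderiv_apply _ _).trans <|
    (hf.isSymmSndFDerivAt (by simp) _ _).trans (hf.fderiv_fderiv_apply _ _).symm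

lemma dρ_eq_zero_of_eventuallyEq_zero (h : f =ᶠ[𝓝 q] 0) : dρ f q = 0 := by
  simp [dρ, fderiv_of_notMem_tsupport (𝕜 := ℝ) (notMem_tsupport_iff_eventuallyEq.2 h)]

lemma dz_eq_zero_of_eventuallyEq_zero (h : f =ᶠ[𝓝 q] 0) : dz f q = 0 := by
  simp [dz, fderiv_of_notMem_tsupport (𝕜 := ℝ) (notMem_tsupport_iff_eventuallyEq.2 h)]

lemma fderiv_fst_mul_sq_sub_sq (ha : DifferentiableAt ℝ a q) (hb : DifferentiableAt ℝ b q)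
    (v : ℝ × ℝ) :
    fderiv ℝ (fun p => p.1 * (a p ^ 2 - b p ^ 2)) q v
      = v.1 * (a q ^ 2 - b q ^ 2) + 2 * q.1 * (a q * fderiv ℝ a q v - b q * fderiv ℝ b q v) := by
  have h : HasFDerivAt (fun p => p.1 * (a p ^ 2 - b p ^ 2)) _ q :=
    hasFDerivAt_fst.mul ((ha.hasFDerivAt.pow 2).sub (hb.hasFDerivAt.pow 2))
  rw [h.fderiv]
  simp
  ring

lemma fderiv_two_mul_fst_mul_mul (ha : DifferentiableAt ℝ a q) (hb : DifferentiableAt ℝ b q)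
    (v : ℝ × ℝ) :
    fderiv ℝ (fun p => 2 * p.1 * a p * b p) q v
      = 2 * v.1 * a q * b q + 2 * q.1 * (fderiv ℝ a q v * b q + a q * fderiv ℝ b q v) := by
  have h : HasFDerivAt (fun p => 2 * p.1 * a p * b p) _ q :=
    ((hasFDerivAt_fst.const_mul 2).mul ha.hasFDerivAt).mul hb.hasFDerivAt
  rw [h.fderiv]
  simp
  ring

end PartialDerivatives

noncomputable def axialLaplacian (f : ℝ × ℝ → ℝ) (q : ℝ × ℝ) : ℝ :=
  dρ (dρ f) q + dρ f q / q.1 + dz (dz f) q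

section WeylEquations

variable {ψ γ : ℝ × ℝ → ℝ} {q : ℝ × ℝ}

lemma fderiv_dρ_of_eventuallyEq (hψ : ContDiffAt ℝ 2 ψ q)
    (hγρ : dρ γ =ᶠ[𝓝 q] fun p => p.1 * (dρ ψ p ^ 2 - dz ψ p ^ 2)) (v : ℝ × ℝ) :
    fderiv ℝ (dρ γ) q v = v.1 * (dρ ψ q ^ 2 - dz ψ q ^ 2)
      + 2 * q.1 * (dρ ψ q * fderiv ℝ (dρ ψ) q v - dz ψ q * fderiv ℝ (dz ψ) q v) := by
  rw [hγρ.fderiv_eq]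
  exact fderiv_fst_mul_sq_sub_sq (hψ.differentiableAt_fderiv_apply _)
    (hψ.differentiableAt_fderiv_apply _) v

lemma fderiv_dz_of_eventuallyEq (hψ : ContDiffAt ℝ 2 ψ q)
    (hγz : dz γ =ᶠ[𝓝 q] fun p => 2 * p.1 * dρ ψ p * dz ψ p) (v : ℝ × ℝ) :
    fderiv ℝ (dz γ) q v = 2 * v.1 * dρ ψ q * dz ψ q
      + 2 * q.1 * (fderiv ℝ (dρ ψ) q v * dz ψ q + dρ ψ q * fderiv ℝ (dz ψ) q v) := by
  rw [hγz.fderiv_eq]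
  exact fderiv_two_mul_fst_mul_mul (hψ.differentiableAt_fderiv_apply _)
    (hψ.differentiableAt_fderiv_apply _) v

lemma dρ_sq_add_dz_sq_add_dρ_dρ_add_dz_dz_eq (hψ : ContDiffAt ℝ 2 ψ q) (hq : q.1 ≠ 0)
    (hγρ : dρ γ =ᶠ[𝓝 q] fun p => p.1 * (dρ ψ p ^ 2 - dz ψ p ^ 2))
    (hγz : dz γ =ᶠ[𝓝 q] fun p => 2 * p.1 * dρ ψ p * dz ψ p) :
    dρ ψ q ^ 2 + dz ψ q ^ 2 + dρ (dρ γ) q + dz (dz γ) q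
      = 2 * q.1 * dρ ψ q * axialLaplacian ψ q := by
  have hρρ := fderiv_dρ_of_eventuallyEq hψ hγρ (1, 0)
  have hzz := fderiv_dz_of_eventuallyEq hψ hγz (0, 1)
  change dρ (dρ γ) q = 1 * _ + 2 * q.1 * (_ * dρ (dρ ψ) q - _ * dρ (dz ψ) q) at hρρ
  change dz (dz γ) q = 2 * 0 * _ * _ + 2 * q.1 * (dz (dρ ψ) q * _ + _ * dz (dz ψ) q) at hzz
  rw [hρρ, hzz, hψ.dz_dρ_comm, axialLaplacian]
  field_simp
  ring

lemma dz_mul_dz_dz_eq_zero (hψ : ContDiffAt ℝ 2 ψ q) (hγ : ContDiffAt ℝ 2 γ q) (hq : q.1 ≠ 0)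
    (hγρ : dρ γ =ᶠ[𝓝 q] fun p => p.1 * (dρ ψ p ^ 2 - dz ψ p ^ 2))
    (hγz : dz γ =ᶠ[𝓝 q] fun p => 2 * p.1 * dρ ψ p * dz ψ p) (hψρ : dρ ψ =ᶠ[𝓝 q] 0) :
    dz ψ q * dz (dz ψ) q = 0 := by
  have hγz0 : dz γ =ᶠ[𝓝 q] 0 := (hγz.and hψρ).mono fun p ⟨h, h'⟩ => by simp [h, h']
  have hρz := fderiv_dρ_of_eventuallyEq hψ hγρ (0, 1)
  change dz (dρ γ) q = 0 * _ + 2 * q.1 * (_ * dz (dρ ψ) q - _ * dz (dz ψ) q) at hρz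
  rw [hγ.dz_dρ_comm, dρ_eq_zero_of_eventuallyEq_zero hγz0, hψρ.eq_of_nhds] at hρz
  simpa [hq] using hρz
end WeylEquations

theorem no_hydrostatic_solution
    (K ε : ℝ) (hK : 0 < K) (hε : ε ≠ 0)
    (D : Set (ℝ × ℝ)) (hDhalf : D ⊆ {p : ℝ × ℝ | 0 < p.1})
    (hDo : IsOpen D) (hDne : D.Nonempty) :
    ¬∃ ψ γ : ℝ × ℝ → ℝ,
      ContDiffOn ℝ 2 ψ D ∧ ContDiffOn ℝ 2 γ D ∧
      (∀ q ∈ D, (dρ ψ q) ^ 2 + (dz ψ q) ^ 2 + dρ (dρ γ) q + dz (dz γ) q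
          - 2 * (dρ (dρ ψ) q + dρ ψ q / q.1 + dz (dz ψ) q)
        = K * ε * Real.exp (2 * γ q - 2 * ψ q)) ∧
      (∀ q ∈ D, dρ γ q = q.1 * ((dρ ψ q) ^ 2 - (dz ψ q) ^ 2)) ∧
      (∀ q ∈ D, dz γ q = 2 * q.1 * dρ ψ q * dz ψ q) ∧
      (∀ q ∈ D, (dρ ψ q) ^ 2 + (dz ψ q) ^ 2 + dρ (dρ γ) q + dz (dz γ) q = 0) := by
  rintro ⟨ψ, γ, hψ, hγ, hfluid, hγρ, hγz, hvac⟩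
  have near {P : ℝ × ℝ → Prop} (h : ∀ p ∈ D, P p) (q : ℝ × ℝ) (hq : q ∈ D) :
      ∀ᶠ p in 𝓝 q, P p :=
    eventually_of_mem (hDo.mem_nhds hq) h
  have hρ (q : ℝ × ℝ) (hq : q ∈ D) : q.1 ≠ 0 := (hDhalf hq).ne'
  have hψ' (q : ℝ × ℝ) (hq : q ∈ D) : ContDiffAt ℝ 2 ψ q := hψ.contDiffAt (hDo.mem_nhds hq)
  have hΔ (q : ℝ × ℝ) (hq : q ∈ D) : axialLaplacian ψ q ≠ 0 := by
    have h := hfluid q hq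
    rw [hvac q hq] at h
    change 0 - 2 * axialLaplacian ψ q = _ at h
    intro h0
    rw [h0] at h
    exact mul_ne_zero (mul_ne_zero hK.ne' hε) (Real.exp_pos _).ne' (by linarith)
  have hψρ (q : ℝ × ℝ) (hq : q ∈ D) : dρ ψ q = 0 := by
    have h := dρ_sq_add_dz_sq_add_dρ_dρ_add_dz_dz_eq (hψ' q hq) (hρ q hq)
      (near hγρ q hq) (near hγz q hq)
    rw [hvac q hq] at h
    simpa [hρ q hq, hΔ q hq] using h.symm
  have hψzz (q : ℝ × ℝ) (hq : q ∈ D) : dz (dz ψ) q ≠ 0 := by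
    simpa [axialLaplacian, hψρ q hq, dρ_eq_zero_of_eventuallyEq_zero (near hψρ q hq)]
      using hΔ q hq
  have hψz (q : ℝ × ℝ) (hq : q ∈ D) : dz ψ q = 0 :=
    (mul_eq_zero.1 (dz_mul_dz_dz_eq_zero (hψ' q hq) (hγ.contDiffAt (hDo.mem_nhds hq)) (hρ q hq)
      (near hγρ q hq) (near hγz q hq) (near hψρ q hq))).resolve_right (hψzz q hq)
  obtain ⟨q, hq⟩ := hDne
  exact hψzz q hq (dz_eq_zero_of_eventuallyEq_zero (near hψz q hq))
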